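/- (Multivariate Breiman lemma.) Let $X\in\mathbb{R}^d$ be $\alpha$-regularly varying with tail measure $\Lambda$ and slowly varying function $L_b$ bounded away from zero and infinity on compacts, and let $A$ be a random $d\times d$ matrix independent of $X$ with $\mathbb{E}\|A\|^{\beta}<\infty$ for some $\beta>\alpha$. Then $AX$ is $\alpha$-regularly varying with tail measure $\widetilde\Lambda$ given by $\langle f,\widetilde\Lambda\rangle=\mathbb{E}[\langle f\circ A,\Lambda\rangle]$ for all $f\in C_c(\mathbb{R}^d\setminus\{0\})$. -/

import Mathlib

/-!
Write `V t = t ^ α * L t` and `μ` for the law of `X`. By independence,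
`𝔼 f(t⁻¹ A X) = 𝔼 ∫ f(t⁻¹ A x) dμ(x)`, so the theorem follows by dominated convergence in `A`
once, for every fixed operator `a`,
(1) `V t ∫ f(t⁻¹ a x) dμ(x) → ∫ f(a x) dΛ(x)`, and
(2) `|V t ∫ f(t⁻¹ a x) dμ(x)| ≤ K (1 + ‖a‖ ^ β)` for all large `t`, uniformly in `a`.

Both come from tail estimates for `μ`. Testing regular variation against a bump on an annulus
gives `V u μ{u ≤ ‖x‖ < 2u} = O(1)`. Since `V (2t) / V t → 2 ^ α`, eventually
`2 ^ (α / 2) V t ≤ V (2t) ≤ 2 ^ β V t`. The lower bound makes the masses of the dyadic annuli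
above `u` decay geometrically, so `V u μ{‖x‖ ≥ u} = O(1)` and `V t μ{‖x‖ ≥ R t} → 0` as
`R → ∞`, uniformly in `t`; iterating the upper bound gives `V t μ{‖x‖ ≥ s t} ≤ C (1 + s ^ (-β))`.
The function `f ∘ a` vanishes near `0` but need not have compact support: (1) follows by
truncating it with radial cutoffs, the error being controlled by the far tail, and (2) follows
from the last estimate, which is where `𝔼 ‖A‖ ^ β < ∞` enters.
-/

open MeasureTheory ProbabilityTheory Filter Topology

noncomputable section

section Doubling

variable {V : ℝ → ℝ} {T : ℝ}

theorem pow_mul_le_of_doubling {c : ℝ} (hT : 0 ≤ T) (hc : 0 ≤ c)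
    (hlow : ∀ t ≥ T, c * V t ≤ V (2 * t)) (k : ℕ) {t : ℝ} (ht : T ≤ t) :
    c ^ k * V t ≤ V (2 ^ k * t) := by
  induction k with
  | zero => simp
  | succ k ih =>
    have hk : T ≤ 2 ^ k * t :=
      ht.trans (le_mul_of_one_le_left (hT.trans ht) (one_le_pow₀ one_le_two))
    calc c ^ (k + 1) * V t = c * (c ^ k * V t) := by ring
      _ ≤ c * V (2 ^ k * t) := mul_le_mul_of_nonneg_left ih hc
      _ ≤ V (2 * (2 ^ k * t)) := hlow _ hk
      _ = V (2 ^ (k + 1) * t) := by rw [pow_succ']; ring_nf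

theorem mul_le_pow_of_doubling {φ : ℝ → ℝ} {C D : ℝ} (hD : 1 ≤ D) (hC : 0 ≤ C)
    (hV : ∀ t ≥ T, 0 ≤ V t) (hφ : Antitone φ) (hφ0 : ∀ s, 0 ≤ φ s) (hφ1 : ∀ s, φ s ≤ 1)
    (hup : ∀ t ≥ T, V (2 * t) ≤ D * V t) (hdiag : ∀ t ≥ T, V t * φ t ≤ C)
    (hwindow : ∀ t ∈ Set.Ico T (2 * T), V t ≤ C) (k : ℕ) :
    ∀ t ≥ T, ∀ s, t ≤ 2 ^ k * s → V t * φ s ≤ C * D ^ k := by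
  induction k with
  | zero =>
    intro t ht s hts
    rw [pow_zero, one_mul] at hts
    calc V t * φ s ≤ V t * φ t := mul_le_mul_of_nonneg_left (hφ hts) (hV t ht)
      _ ≤ C * D ^ 0 := by simpa using hdiag t ht
  | succ k ih =>
    intro t ht s hts
    by_cases h2T : 2 * T ≤ t
    · have hhalf : T ≤ t / 2 := by linarith
      calc V t * φ s = V (2 * (t / 2)) * φ s := by ring_nf
        _ ≤ D * V (t / 2) * φ s := mul_le_mul_of_nonneg_right (hup _ hhalf) (hφ0 s)
        _ = D * (V (t / 2) * φ s) := by ring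
        _ ≤ D * (C * D ^ k) := mul_le_mul_of_nonneg_left
            (ih _ hhalf s (by rw [pow_succ] at hts; linarith)) (by linarith)
        _ = C * D ^ (k + 1) := by ring
    · calc V t * φ s ≤ V t * 1 := mul_le_mul_of_nonneg_left (hφ1 s) (hV t ht)
        _ ≤ C := by simpa using hwindow t ⟨ht, not_le.1 h2T⟩
        _ ≤ C * D ^ (k + 1) := le_mul_of_one_le_right hC (one_le_pow₀ hD)

theorem mul_le_rpow_of_doubling {φ : ℝ → ℝ} {C β : ℝ} (hT : 0 < T) (hβ : 0 ≤ β) (hC : 0 ≤ C)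
    (hV : ∀ t ≥ T, 0 ≤ V t) (hφ : Antitone φ) (hφ0 : ∀ s, 0 ≤ φ s) (hφ1 : ∀ s, φ s ≤ 1)
    (hup : ∀ t ≥ T, V (2 * t) ≤ 2 ^ β * V t) (hdiag : ∀ t ≥ T, V t * φ t ≤ C)
    (hwindow : ∀ t ∈ Set.Ico T (2 * T), V t ≤ C) {t s : ℝ} (ht : T ≤ t) (hs : 0 < s) :
    V t * φ s ≤ C * 2 ^ β * (1 + (t / s) ^ β) := by
  obtain ⟨n, hn, hn'⟩ := exists_nat_pow_near (le_max_left 1 (t / s)) one_lt_two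
  have hts : t ≤ 2 ^ (n + 1) * s := by
    have := (le_max_right 1 (t / s)).trans_lt hn'
    rw [div_lt_iff₀ hs] at this
    linarith
  have hpow : ((2 : ℝ) ^ β) ^ (n + 1) ≤ 2 ^ β * (1 + (t / s) ^ β) := by
    rw [Real.rpow_pow_comm zero_le_two, pow_succ, Real.mul_rpow (by positivity) zero_le_two,
      mul_comm]
    gcongr
    calc ((2 : ℝ) ^ n) ^ β ≤ (max 1 (t / s)) ^ β := by gcongr
      _ ≤ 1 + (t / s) ^ β := by
        rcases max_choice 1 (t / s) with h | h <;> rw [h]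
        · simp only [Real.one_rpow]; linarith [Real.rpow_nonneg (div_pos (hT.trans_le ht) hs).le β]
        · linarith
  calc V t * φ s ≤ C * (2 ^ β) ^ (n + 1) :=
        mul_le_pow_of_doubling (Real.one_le_rpow one_le_two hβ) hC hV hφ hφ0 hφ1 hup hdiag
          hwindow (n + 1) t ht s hts
    _ ≤ C * (2 ^ β * (1 + (t / s) ^ β)) := mul_le_mul_of_nonneg_left hpow hC
    _ = C * 2 ^ β * (1 + (t / s) ^ β) := by ring

end Doubling

section Cutoff

variable {E : Type*} [NormedAddCommGroup E]

def radialCutoff (R : ℝ) (x : E) : ℝ := max 0 (min 1 (2 - ‖x‖ / R))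

theorem continuous_radialCutoff (R : ℝ) : Continuous (radialCutoff R : E → ℝ) :=
  continuous_const.max (continuous_const.min (continuous_const.sub (continuous_norm.div_const R)))

theorem radialCutoff_nonneg (R : ℝ) (x : E) : 0 ≤ radialCutoff R x := le_max_left _ _

theorem radialCutoff_le_one (R : ℝ) (x : E) : radialCutoff R x ≤ 1 :=
  max_le zero_le_one (min_le_left _ _)

theorem radialCutoff_eq_one {R : ℝ} (hR : 0 < R) {x : E} (hx : ‖x‖ ≤ R) :
    radialCutoff R x = 1 := by
  have : ‖x‖ / R ≤ 1 := (div_le_one hR).2 hx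
  rw [radialCutoff, min_eq_left (by linarith), max_eq_right zero_le_one]

theorem radialCutoff_eq_zero {R : ℝ} (hR : 0 < R) {x : E} (hx : 2 * R ≤ ‖x‖) :
    radialCutoff R x = 0 := by
  have : 2 ≤ ‖x‖ / R := (le_div_iff₀ hR).2 hx
  rw [radialCutoff, max_eq_left (min_le_right _ _ |>.trans (by linarith))]

theorem radialCutoff_mono {R R' : ℝ} (hR : 0 < R) (h : R ≤ R') (x : E) :
    radialCutoff R x ≤ radialCutoff R' x := by
  unfold radialCutoff
  gcongr

theorem hasCompactSupport_radialCutoff [ProperSpace E] {R : ℝ} (hR : 0 < R) :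
    HasCompactSupport (radialCutoff R : E → ℝ) :=
  HasCompactSupport.intro (isCompact_closedBall 0 (2 * R)) fun x hx =>
    radialCutoff_eq_zero hR (by simpa using (not_le.1 (mt mem_closedBall_zero_iff.2 hx)).le)

theorem zero_notMem_tsupport_of_eq_zero {F : Type*} [NormedAddCommGroup F] {g : E → F} {r : ℝ}
    (hr : 0 < r) (hg : ∀ x, ‖x‖ < r → g x = 0) : (0 : E) ∉ tsupport g := by
  rw [notMem_tsupport_iff_eventuallyEq]
  filter_upwards [Metric.ball_mem_nhds 0 hr] with x hx
  exact hg x (by simpa using hx)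

theorem exists_pos_eq_zero_of_zero_notMem_tsupport {F : Type*} [NormedAddCommGroup F]
    {g : E → F} (hg : (0 : E) ∉ tsupport g) : ∃ r > 0, ∀ x, ‖x‖ < r → g x = 0 := by
  obtain ⟨r, hr, h⟩ := Metric.eventually_nhds_iff.1 (notMem_tsupport_iff_eventuallyEq.1 hg)
  exact ⟨r, hr, fun x hx => h (by simpa using hx)⟩

/-- Membership in `C_c(E \ {0})`. -/
def IsTailTestFunction (g : E → ℝ) : Prop :=
  Continuous g ∧ HasCompactSupport g ∧ (0 : E) ∉ tsupport g

theorem isTailTestFunction_mul_radialCutoff [ProperSpace E] {g : E → ℝ} (hg : Continuous g)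
    {r R : ℝ} (hr : 0 < r) (hR : 0 < R) (h0 : ∀ x, ‖x‖ < r → g x = 0) :
    IsTailTestFunction (g * radialCutoff R) :=
  ⟨hg.mul (continuous_radialCutoff R), (hasCompactSupport_radialCutoff hR).mul_left,
    zero_notMem_tsupport_of_eq_zero hr fun x hx => by simp [h0 x hx]⟩

theorem monotone_radialCutoff_natCast_add_one (x : E) :
    Monotone fun n : ℕ => radialCutoff ((n : ℝ) + 1) x :=
  fun n _ hnm => radialCutoff_mono n.cast_add_one_pos (by gcongr) x

theorem tendsto_radialCutoff_natCast_add_one (x : E) :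
    Tendsto (fun n : ℕ => radialCutoff ((n : ℝ) + 1) x) atTop (𝓝 1) :=
  tendsto_const_nhds.congr' <| (eventually_ge_atTop ⌈‖x‖⌉₊).mono fun n hn =>
    (radialCutoff_eq_one n.cast_add_one_pos ((Nat.ceil_le.1 hn).trans (by linarith))).symm

theorem norm_mul_radialCutoff_le {g : E → ℝ} {M : ℝ} (hM : ∀ x, ‖g x‖ ≤ M) (R : ℝ) (x : E) :
    ‖g x * radialCutoff R x‖ ≤ M := by
  rw [norm_mul, Real.norm_of_nonneg (radialCutoff_nonneg R x)]
  exact (mul_le_of_le_one_right (norm_nonneg _) (radialCutoff_le_one R x)).trans (hM x)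

def annulusBump : E → ℝ := radialCutoff 2 - radialCutoff (1 / 4)

theorem annulusBump_nonneg (x : E) : 0 ≤ annulusBump x :=
  sub_nonneg.2 (radialCutoff_mono (by norm_num) (by norm_num) x)

theorem annulusBump_le_one (x : E) : annulusBump x ≤ 1 := by
  simp only [annulusBump, Pi.sub_apply]
  linarith [radialCutoff_le_one 2 x, radialCutoff_nonneg (1 / 4) x]

theorem annulusBump_eq_one {x : E} (h1 : 1 / 2 ≤ ‖x‖) (h2 : ‖x‖ ≤ 2) : annulusBump x = 1 := by
  rw [annulusBump, Pi.sub_apply, radialCutoff_eq_one two_pos h2,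
    radialCutoff_eq_zero (by norm_num) (by linarith), sub_zero]

theorem isTailTestFunction_annulusBump [ProperSpace E] :
    IsTailTestFunction (annulusBump : E → ℝ) :=
  ⟨(continuous_radialCutoff 2).sub (continuous_radialCutoff _),
    (hasCompactSupport_radialCutoff two_pos).sub (hasCompactSupport_radialCutoff (by norm_num)),
    zero_notMem_tsupport_of_eq_zero (r := 1 / 4) (by norm_num) fun x hx => by
      rw [annulusBump, Pi.sub_apply, radialCutoff_eq_one two_pos (by linarith),
        radialCutoff_eq_one (by norm_num) hx.le, sub_self]⟩

end Cutoff

section Integral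

variable {α : Type*} [MeasurableSpace α] {μ : Measure α}

theorem norm_integral_le_mul_measureReal {F : Type*} [NormedAddCommGroup F] [NormedSpace ℝ F]
    [IsFiniteMeasure μ] {g : α → F} {s : Set α} {M : ℝ} (hM : ∀ x, ‖g x‖ ≤ M)
    (hg : ∀ x ∉ s, g x = 0) : ‖∫ x, g x ∂μ‖ ≤ M * μ.real s := by
  rw [← setIntegral_eq_integral_of_forall_compl_eq_zero hg]
  exact norm_setIntegral_le_of_norm_le_const (measure_lt_top μ s) fun x _ => hM x

variable {h : α → ℝ} {χ : ℕ → α → ℝ}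

theorem integrable_of_integral_abs_mul_le (hh : Measurable h) (hχ : ∀ n, Measurable (χ n))
    (hχ0 : ∀ n x, 0 ≤ χ n x) (hmono : ∀ x, Monotone fun n => χ n x)
    (hlim : ∀ x, Tendsto (fun n => χ n x) atTop (𝓝 1))
    (hint : ∀ n, Integrable (fun x => |h x| * χ n x) μ) {K : ℝ}
    (hK : ∀ n, ∫ x, |h x| * χ n x ∂μ ≤ K) : Integrable h μ := by
  have hbound : ∀ n, ∫⁻ x, ENNReal.ofReal (|h x| * χ n x) ∂μ ≤ ENNReal.ofReal K := fun n => by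
    rw [← ofReal_integral_eq_lintegral_ofReal (hint n)
      (ae_of_all _ fun x => mul_nonneg (abs_nonneg _) (hχ0 n x))]
    exact ENNReal.ofReal_le_ofReal (hK n)
  have hmct : Tendsto (fun n => ∫⁻ x, ENNReal.ofReal (|h x| * χ n x) ∂μ) atTop
      (𝓝 (∫⁻ x, ENNReal.ofReal ‖h x‖ ∂μ)) := by
    refine lintegral_tendsto_of_tendsto_of_monotone
      (fun n => (ENNReal.measurable_ofReal.comp (hh.abs.mul (hχ n))).aemeasurable)
      (ae_of_all _ fun x n m hnm => ENNReal.ofReal_le_ofReal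
        (mul_le_mul_of_nonneg_left (hmono x hnm) (abs_nonneg _)))
      (ae_of_all _ fun x => ?_)
    have := (ENNReal.continuous_ofReal.tendsto _).comp ((hlim x).const_mul |h x|)
    rwa [mul_one, ← Real.norm_eq_abs] at this
  refine ⟨hh.aestronglyMeasurable, (hasFiniteIntegral_iff_norm h).2 ?_⟩
  exact (le_of_tendsto' hmct hbound).trans_lt ENNReal.ofReal_lt_top

/-- No integrability is assumed: if some truncation of `|h|` fails to be integrable, then so do `h`
and all later truncations of `h`, and every integral involved is `0`. -/
theorem tendsto_integral_mul_of_monotone (hh : Measurable h) (hχ : ∀ n, Measurable (χ n))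
    (hχ0 : ∀ n x, 0 ≤ χ n x) (hχ1 : ∀ n x, χ n x ≤ 1) (hmono : ∀ x, Monotone fun n => χ n x)
    (hlim : ∀ x, Tendsto (fun n => χ n x) atTop (𝓝 1)) {K : ℝ}
    (hK : ∀ n, ∫ x, |h x| * χ n x ∂μ ≤ K) :
    Tendsto (fun n => ∫ x, h x * χ n x ∂μ) atTop (𝓝 (∫ x, h x ∂μ)) := by
  have habs : ∀ n x, ‖h x * χ n x‖ = |h x| * χ n x := fun n x => by
    rw [Real.norm_eq_abs, abs_mul, abs_of_nonneg (hχ0 n x)]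
  by_cases hint : ∀ n, Integrable (fun x => |h x| * χ n x) μ
  · refine tendsto_integral_of_dominated_convergence (fun x => ‖h x‖)
      (fun n => (hh.mul (hχ n)).aestronglyMeasurable)
      (integrable_of_integral_abs_mul_le hh hχ hχ0 hmono hlim hint hK).norm
      (fun n => ae_of_all _ fun x => ?_) (ae_of_all _ fun x => by
        simpa using (hlim x).const_mul (h x))
    rw [habs, Real.norm_eq_abs]
    exact mul_le_of_le_one_right (abs_nonneg _) (hχ1 n x)
  obtain ⟨n₀, hn₀⟩ := not_forall.1 hint
  have hle : ∀ n ≥ n₀, ∀ g : α → ℝ, Integrable g μ → (∀ x, |h x| * χ n x ≤ ‖g x‖) → False :=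
    fun n hn g hg hgh => hn₀ (hg.mono (hh.abs.mul (hχ n₀)).aestronglyMeasurable
      (ae_of_all _ fun x => by
        rw [Real.norm_eq_abs, abs_of_nonneg (mul_nonneg (abs_nonneg _) (hχ0 n₀ x))]
        exact (mul_le_mul_of_nonneg_left (hmono x hn) (abs_nonneg _)).trans (hgh x)))
  have hlim0 : ∫ x, h x ∂μ = 0 := integral_undef fun hi =>
    hle n₀ le_rfl h hi fun x => by
      rw [Real.norm_eq_abs]; exact mul_le_of_le_one_right (abs_nonneg _) (hχ1 n₀ x)
  rw [hlim0]
  refine tendsto_const_nhds.congr' ((eventually_ge_atTop n₀).mono fun n hn => ?_)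
  exact (integral_undef fun hi => hle n hn _ hi fun x => (habs n x).ge).symm

end Integral

section Tail

variable {E : Type*} [SeminormedAddCommGroup E] [MeasurableSpace E]

theorem measure_norm_ge_le_tsum (μ : Measure E) {u : ℝ} (hu : 0 < u) :
    μ {x | u ≤ ‖x‖} ≤ ∑' j : ℕ, μ {x | 2 ^ j * u ≤ ‖x‖ ∧ ‖x‖ < 2 * (2 ^ j * u)} := by
  refine (measure_mono fun x hx => ?_).trans (measure_iUnion_le _)
  obtain ⟨j, hj, hj'⟩ := exists_nat_pow_near ((one_le_div hu).2 hx) one_lt_two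
  refine Set.mem_iUnion.2 ⟨j, ?_, ?_⟩
  · rwa [le_div_iff₀ hu] at hj
  · rw [div_lt_iff₀ hu, pow_succ] at hj'
    linarith

theorem mul_measureReal_norm_ge_le_of_annulus {μ : Measure E} [IsFiniteMeasure μ] {V : ℝ → ℝ}
    {T c K : ℝ} (hT : 0 ≤ T) (hc : 1 < c) (hpos : ∀ t ≥ T, 0 < V t)
    (hlow : ∀ t ≥ T, c * V t ≤ V (2 * t))
    (hK : ∀ u ≥ T, V u * μ.real {x | u ≤ ‖x‖ ∧ ‖x‖ < 2 * u} ≤ K) {u : ℝ} (hu : T ≤ u)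
    (hu0 : 0 < u) : V u * μ.real {x | u ≤ ‖x‖} ≤ K * (1 - c⁻¹)⁻¹ := by
  have hVu := hpos u hu
  have hq0 : 0 ≤ c⁻¹ := inv_nonneg.2 (by linarith)
  have hq1 : c⁻¹ < 1 := inv_lt_one_of_one_lt₀ hc
  have hann : ∀ j : ℕ, μ.real {x | 2 ^ j * u ≤ ‖x‖ ∧ ‖x‖ < 2 * (2 ^ j * u)} ≤
      K / V u * c⁻¹ ^ j := fun j => by
    have hju : T ≤ 2 ^ j * u := hu.trans (le_mul_of_one_le_left hu0.le (one_le_pow₀ one_le_two))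
    have hgrow := pow_mul_le_of_doubling hT (by linarith) hlow j hu
    have hKj := hK _ hju
    rw [div_mul_eq_mul_div, le_div_iff₀ hVu, inv_pow, ← div_eq_mul_inv,
      le_div_iff₀ (by positivity)]
    nlinarith [measureReal_nonneg (μ := μ) (s := {x | 2 ^ j * u ≤ ‖x‖ ∧ ‖x‖ < 2 * (2 ^ j * u)})]
  have hK0 : 0 ≤ K / V u := by simpa using measureReal_nonneg.trans (hann 0)
  have hsum : μ {x | u ≤ ‖x‖} ≤ ENNReal.ofReal (K / V u * (1 - c⁻¹)⁻¹) := by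
    rw [← tsum_geometric_of_lt_one hq0 hq1, ← tsum_mul_left,
      ENNReal.ofReal_tsum_of_nonneg (fun j => by positivity)
        ((summable_geometric_of_lt_one hq0 hq1).mul_left _)]
    exact (measure_norm_ge_le_tsum μ hu0).trans (ENNReal.tsum_le_tsum fun j => by
      rw [← ofReal_measureReal]
      exact ENNReal.ofReal_le_ofReal (hann j))
  have := ENNReal.toReal_le_of_le_ofReal (by positivity) hsum
  rw [← measureReal_def] at this
  calc V u * μ.real {x | u ≤ ‖x‖} ≤ V u * (K / V u * (1 - c⁻¹)⁻¹) :=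
        mul_le_mul_of_nonneg_left this hVu.le
    _ = K * (1 - c⁻¹)⁻¹ := by field_simp

end Tail

theorem norm_inv_smul {E : Type*} [NormedAddCommGroup E] [NormedSpace ℝ E] {t : ℝ} (ht : 0 < t)
    (x : E) : ‖t⁻¹ • x‖ = ‖x‖ / t := by
  rw [norm_smul, Real.norm_of_nonneg (inv_nonneg.2 ht.le), inv_mul_eq_div]

section Scaling

variable {E : Type*} [NormedAddCommGroup E] [NormedSpace ℝ E] [MeasurableSpace E]
  {μ : Measure E} [IsFiniteMeasure μ] {t : ℝ}

theorem norm_integral_comp_inv_smul_le {F : Type*} [NormedAddCommGroup F] [NormedSpace ℝ F]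
    {g : E → F} {M r : ℝ} (hM : ∀ x, ‖g x‖ ≤ M) (hg : ∀ x, ‖x‖ < r → g x = 0) (ht : 0 < t) :
    ‖∫ x, g (t⁻¹ • x) ∂μ‖ ≤ M * μ.real {x | r * t ≤ ‖x‖} :=
  norm_integral_le_mul_measureReal (fun _ => hM _) fun x hx =>
    hg _ (by rw [norm_inv_smul ht, div_lt_iff₀ ht]; exact lt_of_not_ge hx)

theorem norm_integral_sub_integral_mul_radialCutoff_le [OpensMeasurableSpace E] {h : E → ℝ}
    (hh : Continuous h) {M : ℝ} (hM : ∀ x, ‖h x‖ ≤ M) {R : ℝ} (hR : 0 < R) (ht : 0 < t) :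
    ‖∫ x, h (t⁻¹ • x) ∂μ - ∫ x, h (t⁻¹ • x) * radialCutoff R (t⁻¹ • x) ∂μ‖ ≤
      M * μ.real {x | R * t ≤ ‖x‖} := by
  have hint : ∀ g : E → ℝ, Continuous g → (∀ x, ‖g x‖ ≤ M) →
      Integrable (fun x => g (t⁻¹ • x)) μ := fun g hg hgM =>
    Integrable.of_bound (hg.comp (continuous_const_smul t⁻¹)).aestronglyMeasurable M
      (ae_of_all _ fun _ => hgM _)
  rw [← integral_sub (hint h hh hM) (hint (fun y => h y * radialCutoff R y)
    (hh.mul (continuous_radialCutoff R)) (norm_mul_radialCutoff_le hM R))]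
  refine norm_integral_comp_inv_smul_le (g := fun y => h y - h y * radialCutoff R y)
    (fun y => ?_) (fun y hy => ?_) ht
  · rw [← mul_one_sub, norm_mul, Real.norm_of_nonneg (sub_nonneg.2 (radialCutoff_le_one R y))]
    exact (mul_le_of_le_one_right (norm_nonneg _)
      (by linarith [radialCutoff_nonneg R y])).trans (hM y)
  · rw [radialCutoff_eq_one hR hy.le, mul_one, sub_self]

theorem measureReal_annulus_le_integral_annulusBump [OpensMeasurableSpace E] (ht : 0 < t) :
    μ.real {x | t ≤ ‖x‖ ∧ ‖x‖ < 2 * t} ≤ ∫ x, annulusBump (t⁻¹ • x) ∂μ := by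
  have hS : MeasurableSet {x : E | t ≤ ‖x‖ ∧ ‖x‖ < 2 * t} :=
    (measurableSet_le measurable_const measurable_norm).inter
      (measurableSet_lt measurable_norm measurable_const)
  rw [← integral_indicator_one hS]
  refine integral_mono ((integrable_const 1).indicator hS)
    (Integrable.of_bound (((continuous_radialCutoff 2).sub (continuous_radialCutoff _)).comp
      (continuous_const_smul t⁻¹)).aestronglyMeasurable 1 (ae_of_all _ fun x => by
        rw [Real.norm_of_nonneg (annulusBump_nonneg _)]; exact annulusBump_le_one _))
    fun x => ?_
  by_cases hx : x ∈ {x : E | t ≤ ‖x‖ ∧ ‖x‖ < 2 * t}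
  · rw [Set.indicator_of_mem hx, Pi.one_apply, annulusBump_eq_one]
    · rw [norm_inv_smul ht, le_div_iff₀ ht]; linarith [hx.1]
    · rw [norm_inv_smul ht, div_le_iff₀ ht]; linarith [hx.2]
  · rw [Set.indicator_of_notMem hx]
    exact annulusBump_nonneg _

end Scaling

section TailMeasure

variable {E : Type*} [NormedAddCommGroup E] [NormedSpace ℝ E] [MeasurableSpace E]

/-- Regular variation of `μ` with normalisation `V` and tail measure `Λ`; for the law of `X` in
the paper, `V t = t ^ α * L t`. -/
def HasTailMeasure (μ : Measure E) (V : ℝ → ℝ) (Λ : Measure E) : Prop :=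
  ∀ g : E → ℝ, IsTailTestFunction g →
    Tendsto (fun t => V t * ∫ x, g (t⁻¹ • x) ∂μ) atTop (𝓝 (∫ x, g x ∂Λ))

namespace HasTailMeasure

variable {μ Λ : Measure E} {V : ℝ → ℝ} {c : ℝ}

theorem integral_le_of_tail_le (hμ : HasTailMeasure μ V Λ) [IsFiniteMeasure μ]
    (hV : ∀ᶠ t in atTop, 0 ≤ V t) {g : E → ℝ} (hg : IsTailTestFunction g) {M r B : ℝ}
    (hM : ∀ x, ‖g x‖ ≤ M) (h0 : ∀ x, ‖x‖ < r → g x = 0)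
    (hB : ∀ᶠ t in atTop, V t * μ.real {x | r * t ≤ ‖x‖} ≤ B) : ∫ x, g x ∂Λ ≤ M * B := by
  refine le_of_tendsto (hμ g hg) ?_
  filter_upwards [hV, hB, eventually_gt_atTop 0] with t hVt hBt ht
  calc V t * ∫ x, g (t⁻¹ • x) ∂μ ≤ V t * (M * μ.real {x | r * t ≤ ‖x‖}) :=
        mul_le_mul_of_nonneg_left ((le_abs_self _).trans
          (norm_integral_comp_inv_smul_le hM h0 ht)) hVt
    _ = M * (V t * μ.real {x | r * t ≤ ‖x‖}) := by ring
    _ ≤ M * B := mul_le_mul_of_nonneg_left hBt ((norm_nonneg _).trans (hM 0))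

variable [ProperSpace E] [BorelSpace E]

theorem exists_annulus_bound (hμ : HasTailMeasure μ V Λ) [IsFiniteMeasure μ]
    (hV : ∀ᶠ t in atTop, 0 ≤ V t) :
    ∃ K, ∀ᶠ u in atTop, V u * μ.real {x | u ≤ ‖x‖ ∧ ‖x‖ < 2 * u} ≤ K := by
  refine ⟨∫ x, annulusBump x ∂Λ + 1, ?_⟩
  filter_upwards [(hμ _ isTailTestFunction_annulusBump).eventually
    (eventually_le_nhds (lt_add_one _)), hV, eventually_gt_atTop 0] with u hu hVu hu0
  exact (mul_le_mul_of_nonneg_left (measureReal_annulus_le_integral_annulusBump hu0) hVu).trans hu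

theorem exists_tail_bound (hμ : HasTailMeasure μ V Λ) [IsFiniteMeasure μ] (hc : 1 < c)
    (hV : ∀ᶠ t in atTop, 0 < V t ∧ c * V t ≤ V (2 * t)) :
    ∃ C, ∀ᶠ u in atTop, V u * μ.real {x | u ≤ ‖x‖} ≤ C := by
  obtain ⟨K, hK⟩ := hμ.exists_annulus_bound (hV.mono fun t ht => ht.1.le)
  obtain ⟨T, hT⟩ := eventually_atTop.1 ((hV.and hK).and (eventually_gt_atTop 0))
  refine ⟨K * (1 - c⁻¹)⁻¹, eventually_atTop.2 ⟨T, fun u hu => ?_⟩⟩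
  exact mul_measureReal_norm_ge_le_of_annulus (hT T le_rfl).2.le hc
    (fun t ht => (hT t ht).1.1.1) (fun t ht => (hT t ht).1.1.2) (fun t ht => (hT t ht).1.2) hu
    (hT u hu).2

theorem exists_far_tail_le (hμ : HasTailMeasure μ V Λ) [IsFiniteMeasure μ] (hc : 1 < c)
    (hV : ∀ᶠ t in atTop, 0 < V t ∧ c * V t ≤ V (2 * t)) {ε : ℝ} (hε : 0 < ε) :
    ∃ R, ∀ᶠ t in atTop, V t * μ.real {x | R * t ≤ ‖x‖} ≤ ε := by
  obtain ⟨C, hC⟩ := hμ.exists_tail_bound hc hV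
  obtain ⟨T, hT⟩ := eventually_atTop.1 ((hV.and hC).and (eventually_gt_atTop 0))
  have hT0 : 0 < T := (hT T le_rfl).2
  have hc0 : 0 < c := one_pos.trans hc
  obtain ⟨m, hm⟩ := (((tendsto_pow_atTop_nhds_zero_of_lt_one (inv_nonneg.2 hc0.le)
    (inv_lt_one_of_one_lt₀ hc)).const_mul C).eventually_lt_const (by simpa using hε)).exists
  refine ⟨2 ^ m, eventually_atTop.2 ⟨T, fun t ht => ?_⟩⟩
  have hgrow := pow_mul_le_of_doubling hT0.le hc0.le (fun t ht => (hT t ht).1.1.2) m ht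
  have htail := (hT (2 ^ m * t) (ht.trans (le_mul_of_one_le_left (hT0.trans_le ht).le
    (one_le_pow₀ one_le_two)))).1.2
  calc V t * μ.real {x | 2 ^ m * t ≤ ‖x‖}
      = c⁻¹ ^ m * (c ^ m * V t * μ.real {x | 2 ^ m * t ≤ ‖x‖}) := by
        rw [inv_pow]; field_simp
    _ ≤ c⁻¹ ^ m * C := by
        gcongr
        exact (mul_le_mul_of_nonneg_right hgrow measureReal_nonneg).trans htail
    _ ≤ ε := by linarith

theorem exists_tail_le_rpow (hμ : HasTailMeasure μ V Λ) [IsProbabilityMeasure μ] {β : ℝ}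
    (hc : 1 < c) (hβ : 0 ≤ β)
    (hV : ∀ᶠ t in atTop, 0 < V t ∧ c * V t ≤ V (2 * t) ∧ V (2 * t) ≤ 2 ^ β * V t)
    (hloc : ∀ a b, 0 < a → BddAbove (V '' Set.Icc a b)) :
    ∃ C, 0 ≤ C ∧ ∀ᶠ t in atTop, ∀ s > 0,
      V t * μ.real {x | s * t ≤ ‖x‖} ≤ C * (1 + s⁻¹ ^ β) := by
  obtain ⟨C₀, hC₀⟩ := hμ.exists_tail_bound hc (hV.mono fun t ht => ⟨ht.1, ht.2.1⟩)
  obtain ⟨T, hT⟩ := eventually_atTop.1 ((hV.and hC₀).and (eventually_gt_atTop 0))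
  have hT0 : 0 < T := (hT T le_rfl).2
  obtain ⟨M, hM⟩ := hloc T (2 * T) hT0
  have hC : 0 ≤ max C₀ M := le_max_of_le_left <|
    (mul_nonneg (hT T le_rfl).1.1.1.le measureReal_nonneg).trans (hT T le_rfl).1.2
  refine ⟨max C₀ M * 2 ^ β, by positivity, eventually_atTop.2 ⟨T, fun t ht s hs => ?_⟩⟩
  have hts : t / (s * t) = s⁻¹ := by field_simp [(hT0.trans_le ht).ne']
  rw [← hts]
  exact mul_le_rpow_of_doubling (φ := fun s => μ.real {x | s ≤ ‖x‖}) hT0 hβ hC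
    (fun t ht => (hT t ht).1.1.1.le) (fun s s' hss => measureReal_mono fun x hx => hss.trans hx)
    (fun s => measureReal_nonneg) (fun s => measureReal_le_one) (fun t ht => (hT t ht).1.1.2.2)
    (fun t ht => (hT t ht).1.2.trans (le_max_left _ _))
    (fun t ht => (hM ⟨t, ⟨ht.1, ht.2.le⟩, rfl⟩).trans (le_max_right _ _)) ht
    (mul_pos hs (hT0.trans_le ht))

theorem tendsto_integral_of_far_tail_le (hμ : HasTailMeasure μ V Λ) [IsFiniteMeasure μ]
    (hV : ∀ᶠ t in atTop, 0 ≤ V t)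
    (hfar : ∀ ε > 0, ∃ R, ∀ᶠ t in atTop, V t * μ.real {x | R * t ≤ ‖x‖} ≤ ε)
    {h : E → ℝ} (hh : Continuous h) {M r B : ℝ} (hM : ∀ x, ‖h x‖ ≤ M) (hr : 0 < r)
    (h0 : ∀ x, ‖x‖ < r → h x = 0) (hB : ∀ᶠ t in atTop, V t * μ.real {x | r * t ≤ ‖x‖} ≤ B) :
    Tendsto (fun t => V t * ∫ x, h (t⁻¹ • x) ∂μ) atTop (𝓝 (∫ x, h x ∂Λ)) := by
  have hRpos : ∀ n : ℕ, (0 : ℝ) < n + 1 := fun n => n.cast_add_one_pos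
  have hM0 : 0 ≤ M := (norm_nonneg _).trans (hM 0)
  have habs0 : ∀ x, ‖x‖ < r → |h x| = 0 := fun x hx => by rw [h0 x hx, abs_zero]
  have hK : ∀ n : ℕ, ∫ x, |h x| * radialCutoff (n + 1) x ∂Λ ≤ M * B := fun n =>
    hμ.integral_le_of_tail_le hV (isTailTestFunction_mul_radialCutoff hh.abs hr (hRpos n) habs0)
      (norm_mul_radialCutoff_le (fun x => by rw [norm_abs_eq_norm]; exact hM x) _)
      (fun x hx => by rw [Pi.mul_apply, habs0 x hx, zero_mul]) hB
  refine TendstoUniformlyOnFilter.tendsto_of_eventually_tendsto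
    (F := fun (n : ℕ) t => V t * ∫ x, h (t⁻¹ • x) * radialCutoff ((n : ℝ) + 1) (t⁻¹ • x) ∂μ) ?_
    (Eventually.of_forall fun n =>
      hμ _ (isTailTestFunction_mul_radialCutoff hh hr (hRpos n) h0))
    (tendsto_integral_mul_of_monotone hh.measurable
      (fun n => (continuous_radialCutoff _).measurable) (fun n => radialCutoff_nonneg _)
      (fun n => radialCutoff_le_one _) monotone_radialCutoff_natCast_add_one
      tendsto_radialCutoff_natCast_add_one hK)
  rw [Metric.tendstoUniformlyOnFilter_iff]
  intro ε hε
  obtain ⟨R, hR⟩ := hfar (ε / (M + 1)) (by positivity)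
  filter_upwards [(eventually_ge_atTop ⌈R⌉₊).prod_mk (hR.and (hV.and (eventually_gt_atTop 0)))]
    with ⟨n, t⟩ ⟨hn, hRt, hVt, ht⟩
  have hRn : {x : E | ((n : ℝ) + 1) * t ≤ ‖x‖} ⊆ {x | R * t ≤ ‖x‖} := fun x hx =>
    (mul_le_mul_of_nonneg_right ((Nat.le_ceil R).trans (by exact_mod_cast hn.trans n.le_succ))
      ht.le).trans hx
  rw [Real.dist_eq, ← mul_sub, abs_mul, abs_of_nonneg hVt, ← Real.norm_eq_abs]
  calc V t * ‖_‖ ≤ V t * (M * μ.real {x | ((n : ℝ) + 1) * t ≤ ‖x‖}) :=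
        mul_le_mul_of_nonneg_left
          (norm_integral_sub_integral_mul_radialCutoff_le hh hM (hRpos n) ht) hVt
    _ ≤ V t * (M * μ.real {x | R * t ≤ ‖x‖}) :=
        mul_le_mul_of_nonneg_left (mul_le_mul_of_nonneg_left (measureReal_mono hRn) hM0) hVt
    _ = M * (V t * μ.real {x | R * t ≤ ‖x‖}) := by ring
    _ ≤ M * (ε / (M + 1)) := mul_le_mul_of_nonneg_left hRt hM0
    _ < ε := by
        rw [← mul_div_assoc, div_lt_iff₀ (by linarith)]
        nlinarith

end HasTailMeasure

end TailMeasure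

theorem one_add_rpow_max_div_le {x δ β : ℝ} (hx : 0 ≤ x) (hδ : 0 < δ) :
    1 + (max x δ / δ) ^ β ≤ (2 + (δ ^ β)⁻¹) * (1 + x ^ β) := by
  have hδβ : 0 < δ ^ β := Real.rpow_pos_of_pos hδ β
  have hxβ : 0 ≤ x ^ β := Real.rpow_nonneg hx β
  have hmax : max x δ ^ β ≤ x ^ β + δ ^ β := by
    rcases max_choice x δ with h | h <;> rw [h] <;> linarith
  rw [Real.div_rpow (hx.trans (le_max_left x δ)) hδ.le]
  calc 1 + max x δ ^ β / δ ^ β ≤ 1 + (x ^ β + δ ^ β) / δ ^ β := by gcongr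
    _ = 2 + (δ ^ β)⁻¹ * x ^ β := by field_simp; ring
    _ ≤ (2 + (δ ^ β)⁻¹) * (1 + x ^ β) := by nlinarith [inv_pos.2 hδβ]

section Operators

variable {E F : Type*} [NormedAddCommGroup E] [NormedSpace ℝ E] [NormedAddCommGroup F]
  [NormedSpace ℝ F] {f : F → ℝ}

/-- `max ‖a‖ δ` rather than `‖a‖` keeps the radius positive when `a = 0`. -/
theorem apply_eq_zero_of_norm_lt_div_max {δ : ℝ} (hδ : 0 < δ) (hf : ∀ y, ‖y‖ < δ → f y = 0)
    (a : E →L[ℝ] F) {x : E} (hx : ‖x‖ < δ / max ‖a‖ δ) : f (a x) = 0 := by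
  have hm : 0 < max ‖a‖ δ := lt_max_of_lt_right hδ
  refine hf _ ?_
  calc ‖a x‖ ≤ ‖a‖ * ‖x‖ := a.le_opNorm x
    _ ≤ max ‖a‖ δ * ‖x‖ := by gcongr; exact le_max_left _ _
    _ < max ‖a‖ δ * (δ / max ‖a‖ δ) := by gcongr
    _ = δ := by field_simp

theorem continuous_integral_comp_clm [MeasurableSpace E] [OpensMeasurableSpace E]
    [SecondCountableTopology E] (hf : Continuous f) {M : ℝ} (hM : ∀ y, ‖f y‖ ≤ M)
    (μ : Measure E) [IsFiniteMeasure μ] : Continuous fun a : E →L[ℝ] F => ∫ x, f (a x) ∂μ :=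
  continuous_of_dominated (fun a => (hf.comp a.continuous).aestronglyMeasurable)
    (fun _ => ae_of_all _ fun _ => hM _) (integrable_const M)
    (ae_of_all _ fun _ => hf.comp (continuous_id.clm_apply continuous_const))

variable [ProperSpace E] [MeasurableSpace E] [BorelSpace E] {μ Λ : Measure E} {V : ℝ → ℝ}
  {c β : ℝ}

namespace HasTailMeasure

theorem tendsto_integral_comp_clm (hμ : HasTailMeasure μ V Λ) [IsProbabilityMeasure μ]
    (hc : 1 < c) (hβ : 0 ≤ β)
    (hV : ∀ᶠ t in atTop, 0 < V t ∧ c * V t ≤ V (2 * t) ∧ V (2 * t) ≤ 2 ^ β * V t)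
    (hloc : ∀ a b, 0 < a → BddAbove (V '' Set.Icc a b)) (hf : Continuous f)
    (hfc : HasCompactSupport f) (hf0 : (0 : F) ∉ tsupport f) (a : E →L[ℝ] F) :
    Tendsto (fun t => V t * ∫ x, f (t⁻¹ • a x) ∂μ) atTop (𝓝 (∫ x, f (a x) ∂Λ)) := by
  obtain ⟨M, hM⟩ := hf.bounded_above_of_compact_support hfc
  obtain ⟨δ, hδ, hfδ⟩ := exists_pos_eq_zero_of_zero_notMem_tsupport hf0
  obtain ⟨C, -, hC⟩ := hμ.exists_tail_le_rpow hc hβ hV hloc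
  have hV' : ∀ᶠ t in atTop, 0 < V t ∧ c * V t ≤ V (2 * t) := hV.mono fun t ht => ⟨ht.1, ht.2.1⟩
  have hr : 0 < δ / max ‖a‖ δ := div_pos hδ (lt_max_of_lt_right hδ)
  simpa only [map_smul] using hμ.tendsto_integral_of_far_tail_le (hV'.mono fun t ht => ht.1.le)
    (fun ε hε => hμ.exists_far_tail_le hc hV' hε) (h := fun x => f (a x)) (hf.comp a.continuous)
    (fun x => hM _) hr (fun x hx => apply_eq_zero_of_norm_lt_div_max hδ hfδ a hx)
    (hC.mono fun t hCt => hCt _ hr)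

theorem exists_norm_integral_comp_clm_le (hμ : HasTailMeasure μ V Λ) [IsProbabilityMeasure μ]
    (hc : 1 < c) (hβ : 0 ≤ β)
    (hV : ∀ᶠ t in atTop, 0 < V t ∧ c * V t ≤ V (2 * t) ∧ V (2 * t) ≤ 2 ^ β * V t)
    (hloc : ∀ a b, 0 < a → BddAbove (V '' Set.Icc a b)) (hf : Continuous f)
    (hfc : HasCompactSupport f) (hf0 : (0 : F) ∉ tsupport f) :
    ∃ K, ∀ᶠ t in atTop, ∀ a : E →L[ℝ] F, ‖V t * ∫ x, f (t⁻¹ • a x) ∂μ‖ ≤ K * (1 + ‖a‖ ^ β) := by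
  obtain ⟨M, hM⟩ := hf.bounded_above_of_compact_support hfc
  have hM0 : 0 ≤ M := (norm_nonneg _).trans (hM 0)
  obtain ⟨δ, hδ, hfδ⟩ := exists_pos_eq_zero_of_zero_notMem_tsupport hf0
  obtain ⟨C, hC0, hC⟩ := hμ.exists_tail_le_rpow hc hβ hV hloc
  refine ⟨M * C * (2 + (δ ^ β)⁻¹), ?_⟩
  filter_upwards [hC, hV, eventually_gt_atTop 0] with t hCt hVt ht a
  have hr : 0 < δ / max ‖a‖ δ := div_pos hδ (lt_max_of_lt_right hδ)
  have hint := norm_integral_comp_inv_smul_le (μ := μ) (g := fun x => f (a x)) (fun x => hM _)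
    (fun x hx => apply_eq_zero_of_norm_lt_div_max hδ hfδ a hx) ht
  have htail := hCt _ hr
  simp only [map_smul] at hint
  rw [inv_div] at htail
  rw [norm_mul, Real.norm_of_nonneg hVt.1.le]
  calc V t * ‖∫ x, f (t⁻¹ • a x) ∂μ‖
      ≤ V t * (M * μ.real {x | δ / max ‖a‖ δ * t ≤ ‖x‖}) :=
        mul_le_mul_of_nonneg_left hint hVt.1.le
    _ = M * (V t * μ.real {x | δ / max ‖a‖ δ * t ≤ ‖x‖}) := by ring
    _ ≤ M * (C * ((2 + (δ ^ β)⁻¹) * (1 + ‖a‖ ^ β))) := mul_le_mul_of_nonneg_left (htail.trans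
        (mul_le_mul_of_nonneg_left (one_add_rpow_max_div_le (norm_nonneg a) hδ) hC0)) hM0
    _ = M * C * (2 + (δ ^ β)⁻¹) * (1 + ‖a‖ ^ β) := by ring

theorem tendsto_integral_integral_comp_clm (hμ : HasTailMeasure μ V Λ) [IsProbabilityMeasure μ]
    (hc : 1 < c) (hβ : 0 ≤ β)
    (hV : ∀ᶠ t in atTop, 0 < V t ∧ c * V t ≤ V (2 * t) ∧ V (2 * t) ≤ 2 ^ β * V t)
    (hloc : ∀ a b, 0 < a → BddAbove (V '' Set.Icc a b)) (hf : Continuous f)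
    (hfc : HasCompactSupport f) (hf0 : (0 : F) ∉ tsupport f) {Ω : Type*} [MeasurableSpace Ω]
    {P : Measure Ω} [IsFiniteMeasure P] [MeasurableSpace (E →L[ℝ] F)]
    [OpensMeasurableSpace (E →L[ℝ] F)] {A : Ω → E →L[ℝ] F} (hA : Measurable A)
    (hAβ : Integrable (fun ω => ‖A ω‖ ^ β) P) :
    Tendsto (fun t => V t * ∫ ω, ∫ x, f (t⁻¹ • A ω x) ∂μ ∂P) atTop
      (𝓝 (∫ ω, ∫ x, f (A ω x) ∂Λ ∂P)) := by
  obtain ⟨M, hM⟩ := hf.bounded_above_of_compact_support hfc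
  obtain ⟨K, hK⟩ := hμ.exists_norm_integral_comp_clm_le hc hβ hV hloc hf hfc hf0
  simp only [← integral_const_mul (V _) (fun ω => ∫ x, f (_ • A ω x) ∂μ)]
  exact tendsto_integral_filter_of_dominated_convergence (fun ω => K * (1 + ‖A ω‖ ^ β))
    (Eventually.of_forall fun t => (continuous_const.mul (continuous_integral_comp_clm
      (hf.comp (continuous_const_smul t⁻¹)) (fun _ => hM _) μ)).measurable.comp hA
      |>.aestronglyMeasurable)
    (hK.mono fun t ht => ae_of_all _ fun ω => ht (A ω))
    (((integrable_const 1).add hAβ).const_mul K)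
    (ae_of_all _ fun ω => hμ.tendsto_integral_comp_clm hc hβ hV hloc hf hfc hf0 (A ω))

end HasTailMeasure

end Operators

theorem eventually_doubling_bounds {V : ℝ → ℝ} {γ α β : ℝ} (hV₀ : ∀ᶠ t in atTop, 0 < V t)
    (hV₂ : Tendsto (fun t => V (2 * t) / V t) atTop (𝓝 (2 ^ α))) (hγ : γ < α) (hβ : α < β) :
    ∀ᶠ t in atTop, 0 < V t ∧ 2 ^ γ * V t ≤ V (2 * t) ∧ V (2 * t) ≤ 2 ^ β * V t := by
  filter_upwards [hV₀,
    hV₂.eventually (lt_mem_nhds (Real.rpow_lt_rpow_of_exponent_lt one_lt_two hγ)),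
    hV₂.eventually (gt_mem_nhds (Real.rpow_lt_rpow_of_exponent_lt one_lt_two hβ))]
    with t hVt hlow hup
  rw [lt_div_iff₀ hVt] at hlow
  rw [div_lt_iff₀ hVt] at hup
  exact ⟨hVt, hlow.le, hup.le⟩

section SlowlyVarying

variable {L : ℝ → ℝ} {α : ℝ}

theorem tendsto_rpow_mul_doubling_ratio (hL : Tendsto (fun t => L (2 * t) / L t) atTop (𝓝 1)) :
    Tendsto (fun t => (2 * t) ^ α * L (2 * t) / (t ^ α * L t)) atTop (𝓝 (2 ^ α)) := by
  have h := hL.const_mul ((2 : ℝ) ^ α)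
  rw [mul_one] at h
  refine h.congr' ((eventually_gt_atTop 0).mono fun t ht => ?_)
  show _ = (2 * t) ^ α * L (2 * t) / (t ^ α * L t)
  rw [Real.mul_rpow zero_le_two ht.le, mul_assoc, mul_div_assoc, mul_div_mul_left _ _
    (Real.rpow_pos_of_pos ht α).ne']

theorem bddAbove_rpow_mul_image_Icc (hα : 0 ≤ α)
    (hL : ∀ a b : ℝ, 0 < a → ∃ m M : ℝ, 0 < m ∧ ∀ t ∈ Set.Icc a b, m ≤ L t ∧ L t ≤ M)
    (a b : ℝ) (ha : 0 < a) : BddAbove ((fun t => t ^ α * L t) '' Set.Icc a b) := by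
  obtain ⟨m, M, hm, hmM⟩ := hL a b ha
  refine ⟨b ^ α * M, ?_⟩
  rintro _ ⟨t, ht, rfl⟩
  exact mul_le_mul (Real.rpow_le_rpow (ha.le.trans ht.1) ht.2 hα) (hmM t ht).2
    (hm.le.trans (hmM t ht).1) (Real.rpow_nonneg (ha.le.trans (ht.1.trans ht.2)) α)

end SlowlyVarying

theorem ProbabilityTheory.IndepFun.integral_comp_eq_integral_integral_map {Ω α β : Type*}
    [MeasurableSpace Ω] [MeasurableSpace α] [MeasurableSpace β] {P : Measure Ω}
    [IsFiniteMeasure P] {A : Ω → α} {X : Ω → β} (hA : Measurable A) (hX : Measurable X)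
    (hAX : IndepFun A X P) {G : α × β → ℝ} (hG : Integrable G ((P.map A).prod (P.map X))) :
    ∫ ω, G (A ω, X ω) ∂P = ∫ ω, ∫ x, G (A ω, x) ∂(P.map X) ∂P := by
  have hmap := hAX.map_prod_eq_prod_map_map hA.aemeasurable hX.aemeasurable
  calc ∫ ω, G (A ω, X ω) ∂P = ∫ p, G p ∂(P.map fun ω => (A ω, X ω)) :=
        (integral_map (hA.prodMk hX).aemeasurable (hmap ▸ hG.aestronglyMeasurable)).symm
    _ = ∫ a, ∫ x, G (a, x) ∂(P.map X) ∂(P.map A) := by rw [hmap, integral_prod G hG]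
    _ = ∫ ω, ∫ x, G (A ω, x) ∂(P.map X) ∂P :=
        integral_map hA.aemeasurable hG.integral_prod_left.aestronglyMeasurable

/-- multivariate Breiman lemma: if `X` is `α`-regularly varying
with tail measure `Λ` (slowly varying `L` bounded away from `0,∞` on compacts),
`A` is a random matrix independent of `X` with `𝔼‖A‖^β < ∞` for some `β > α`,
then `AX` is `α`-regularly varying with tail measure
`⟨f, Λ̃⟩ = 𝔼[⟨f ∘ A, Λ⟩]`. -/
theorem multivariate_breiman
    {Ω : Type*} [MeasurableSpace Ω] {d : ℕ}
    [MeasurableSpace (EuclideanSpace ℝ (Fin d) →L[ℝ] EuclideanSpace ℝ (Fin d))]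
    [BorelSpace (EuclideanSpace ℝ (Fin d) →L[ℝ] EuclideanSpace ℝ (Fin d))]
    (P : Measure Ω) [IsProbabilityMeasure P]
    (X : Ω → EuclideanSpace ℝ (Fin d)) (hX : Measurable X)
    (A : Ω → EuclideanSpace ℝ (Fin d) →L[ℝ] EuclideanSpace ℝ (Fin d))
    (hA : Measurable A)
    (hAX : IndepFun A X P)
    (α β : ℝ) (hα : 0 < α) (hβ : α < β)
    (hAmom : Integrable (fun ω => ‖A ω‖ ^ β) P)
    (L : ℝ → ℝ)
    (hLslow : ∀ l : ℝ, 0 < l →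
      Tendsto (fun t => L (l * t) / L t) atTop (𝓝 1))
    (hLbdd : ∀ a b : ℝ, 0 < a →
      ∃ m M : ℝ, 0 < m ∧ ∀ t ∈ Set.Icc a b, m ≤ L t ∧ L t ≤ M)
    (Λ : Measure (EuclideanSpace ℝ (Fin d)))
    (hconv : ∀ f : EuclideanSpace ℝ (Fin d) → ℝ, Continuous f →
      HasCompactSupport f → (0 : EuclideanSpace ℝ (Fin d)) ∉ tsupport f →
      Tendsto (fun t : ℝ => t ^ α * L t * ∫ ω, f (t⁻¹ • X ω) ∂P) atTop
        (𝓝 (∫ x, f x ∂Λ))) :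
    ∀ f : EuclideanSpace ℝ (Fin d) → ℝ, Continuous f →
      HasCompactSupport f → (0 : EuclideanSpace ℝ (Fin d)) ∉ tsupport f →
      Tendsto (fun t : ℝ => t ^ α * L t * ∫ ω, f (t⁻¹ • (A ω) (X ω)) ∂P) atTop
        (𝓝 (∫ ω, ∫ x, f ((A ω) x) ∂Λ ∂P)) := by
  intro f hf hfc hf0
  set V : ℝ → ℝ := fun t => t ^ α * L t
  have := Measure.isProbabilityMeasure_map (μ := P) hX.aemeasurable
  have hμ : HasTailMeasure (P.map X) V Λ := fun g ⟨hg, hgc, hg0⟩ =>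
    (hconv g hg hgc hg0).congr fun t => by
      rw [integral_map hX.aemeasurable (hg.comp (continuous_const_smul t⁻¹)).aestronglyMeasurable
        (f := fun y => g (t⁻¹ • y))]
  have hVpos : ∀ᶠ t in atTop, 0 < V t := (eventually_gt_atTop 0).mono fun t ht => by
    obtain ⟨m, M, hm, hmM⟩ := hLbdd t t ht
    exact mul_pos (Real.rpow_pos_of_pos ht α) (hm.trans_le (hmM t ⟨le_rfl, le_rfl⟩).1)
  have hV := eventually_doubling_bounds hVpos
    (tendsto_rpow_mul_doubling_ratio (hLslow 2 two_pos)) (half_lt_self hα) hβ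
  have hc : 1 < (2 : ℝ) ^ (α / 2) := Real.one_lt_rpow one_lt_two (half_pos hα)
  obtain ⟨M, hM⟩ := hf.bounded_above_of_compact_support hfc
  have hind : ∀ t : ℝ, ∫ ω, f (t⁻¹ • A ω (X ω)) ∂P =
      ∫ ω, ∫ x, f (t⁻¹ • A ω x) ∂(P.map X) ∂P := fun t =>
    hAX.integral_comp_eq_integral_integral_map hA hX (G := fun p => f (t⁻¹ • p.1 p.2))
      (Integrable.of_bound ((hf.comp ((continuous_fst.clm_apply continuous_snd).const_smul
        t⁻¹)).aestronglyMeasurable) M (ae_of_all _ fun _ => hM _))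
  simp_rw [hind]
  exact hμ.tendsto_integral_integral_comp_clm hc (hα.trans hβ).le hV
    (bddAbove_rpow_mul_image_Icc hα.le hLbdd) hf hfc hf0 hA hAmom

end
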